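/- arXiv:0709.1353 — 4 statements merged into one kernel-verified Lean document; each statement's English description precedes it below -/
import Mathlib

section
/- Let $T \in L(\mathbb{V})$ with $m_T(x) = p(x)^d$, $p(x)$ monic irreducible of degree $m$. Then for each $1 \leq i \leq d$, the operator induced by $T$ on $\mathbb{V}_i/\mathbb{V}_{i-1}$ (where $\mathbb{V}_i = \ker p(T)^i$) has minimal polynomial $p(x)$; consequently $m$ divides $\dim_{\mathbb{F}} \mathbb{V}_i/\mathbb{V}_{i-1}$ for each $i$, and $m$ divides $\dim_{\mathbb{F}} \mathbb{V}$. -/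
/-!
Write `P = p(T)` and `Vₖ = ker Pᵏ`. If `p ∤ q`, Bézout `a p^(k+1) + b q = 1` shows that
`q(T) x ∈ Vₖ` forces `x ∈ Vₖ` for `x ∈ Vₖ₊₁`, which is impossible once `Vₖ ⊊ Vₖ₊₁`. The kernels do
grow strictly below `d`: once the chain stalls it stalls for good, which would give `p(T)ᵏ = 0`
with `k < d`.
`Pᵏ` maps `Vₖ₊₁` onto a `T`-invariant subspace of `ker P` of dimension `dim Vₖ₊₁ - dim Vₖ`. On it
`p(T) = 0`, making it a vector space over the field `F[X]/(p)`, which has degree `m` over `F`.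
Summing over `k` gives `m ∣ dim V_d = dim V`.
-/

open Polynomial Module LinearMap

theorem Module.End.ker_pow_le_ker_pow_succ {R M : Type*} [Semiring R] [AddCommMonoid M]
    [Module R M] (P : Module.End R M) (k : ℕ) : ker (P ^ k) ≤ ker (P ^ (k + 1)) := by
  rw [pow_succ']
  exact ker_le_ker_comp (P ^ k) P

section CommRing

variable {R M : Type*} [CommRing R] [AddCommGroup M] [Module R M] (T : Module.End R M)

theorem aeval_apply_eq_zero_of_isCoprime {r q : R[X]} (h : IsCoprime r q) (s : R[X]) {x : M}
    (hr : aeval T r x = 0) (hsq : aeval T s (aeval T q x) = 0) : aeval T s x = 0 := by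
  obtain ⟨a, b, hab⟩ := h
  have hs : s = s * a * r + b * (s * q) := by linear_combination (-s) * hab
  rw [hs]
  simp only [map_add, map_mul, LinearMap.add_apply, Module.End.mul_apply, hr, hsq, map_zero,
    add_zero]

theorem aeval_apply_mem_ker_pow_of_dvd {p q : R[X]} (h : p ∣ q) (k : ℕ) {x : M}
    (hx : x ∈ ker (aeval T p ^ (k + 1))) : aeval T q x ∈ ker (aeval T p ^ k) := by
  obtain ⟨r, rfl⟩ := h
  rw [mem_ker] at hx ⊢
  rw [← Module.End.mul_apply, ← map_pow, ← map_mul,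
    show p ^ k * (p * r) = r * p ^ (k + 1) by ring, map_mul, Module.End.mul_apply, map_pow, hx,
    map_zero]

theorem Module.End.mapsTo_map_pow_ker_pow {P : Module.End R M} (hTP : Commute T P) (k l : ℕ) :
    ∀ x ∈ (ker (P ^ l)).map (P ^ k), T x ∈ (ker (P ^ l)).map (P ^ k) := by
  rintro _ ⟨x, hx, rfl⟩
  refine ⟨T x, ?_, LinearMap.congr_fun (hTP.pow_right k).eq.symm x⟩
  rw [SetLike.mem_coe, mem_ker] at hx ⊢
  rw [← Module.End.mul_apply, ← (hTP.pow_right l).eq, Module.End.mul_apply, hx, map_zero]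

theorem coe_aeval_restrict_apply {U : Submodule R M} (hU : ∀ x ∈ U, T x ∈ U) (q : R[X])
    (x : U) : (aeval (T.restrict hU) q x : M) = aeval T q x := by
  induction q using Polynomial.induction_on' with
  | add f g hf hg => simp [hf, hg]
  | monomial n a =>
    simp only [aeval_monomial, Module.End.mul_apply, Module.algebraMap_end_apply,
      Module.End.pow_restrict _ hU, restrict_apply, SetLike.val_smul]

end CommRing

section DivisionRing

variable {K V : Type*} [DivisionRing K] [AddCommGroup V] [Module K V]

theorem Module.End.pow_eq_zero_of_ker_pow_succ_le {P : Module.End K V} {d k : ℕ} (hd : P ^ d = 0)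
    (hkd : k ≤ d) (h : ker (P ^ (k + 1)) ≤ ker (P ^ k)) : P ^ k = 0 := by
  have hstable :=
    Module.End.ker_pow_constant (le_antisymm (Module.End.ker_pow_le_ker_pow_succ P k) h) (d - k)
  rw [Nat.add_sub_cancel' hkd, hd, ker_zero] at hstable
  exact ker_eq_top.mp hstable

theorem Module.End.finrank_map_pow_ker_pow_succ_add [FiniteDimensional K V] (P : Module.End K V)
    (k : ℕ) : finrank K ((ker (P ^ (k + 1))).map (P ^ k)) + finrank K (ker (P ^ k)) =
      finrank K (ker (P ^ (k + 1))) := by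
  rw [← LinearMap.finrank_range_add_finrank_ker ((P ^ k).domRestrict (ker (P ^ (k + 1)))),
    range_domRestrict, ker_domRestrict,
    (Submodule.comapSubtypeEquivOfLe (Module.End.ker_pow_le_ker_pow_succ P k)).finrank_eq]

end DivisionRing

section Field

variable {F V : Type*} [Field F] [AddCommGroup V] [Module F V]

theorem aeval_pow_ne_zero_of_minpoly_eq_pow {A : Type*} [Ring A] [Algebra F A] {x : A} {p : F[X]}
    (hp : Irreducible p) {d k : ℕ} (hmin : minpoly F x = p ^ d) (hk : k < d) :
    aeval x p ^ k ≠ 0 := by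
  intro h
  have hdvd := minpoly.dvd F x (by rwa [map_pow])
  rw [hmin, pow_dvd_pow_iff hp.ne_zero hp.not_isUnit] at hdvd
  omega

theorem forall_aeval_mem_ker_pow_iff_dvd (T : Module.End F V) {p q : F[X]} (hp : Irreducible p)
    {k : ℕ} (hk : ¬ ker (aeval T p ^ (k + 1)) ≤ ker (aeval T p ^ k)) :
    (∀ x ∈ ker (aeval T p ^ (k + 1)), aeval T q x ∈ ker (aeval T p ^ k)) ↔ p ∣ q := by
  refine ⟨fun h => ?_, fun h x => aeval_apply_mem_ker_pow_of_dvd T h k⟩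
  by_contra hpq
  have hcop : IsCoprime (p ^ (k + 1)) q := ((hp.coprime_iff_not_dvd).mpr hpq).pow_left
  refine hk fun x hx => ?_
  have hqx := h x hx
  rw [mem_ker, ← map_pow] at hx hqx ⊢
  exact aeval_apply_eq_zero_of_isCoprime T hcop _ hx hqx

theorem natDegree_dvd_finrank_of_aeval_eq_zero {S : Module.End F V} {p : F[X]}
    (hp : Irreducible p) (h : aeval S p = 0) : p.natDegree ∣ finrank F V := by
  have := Fact.mk hp
  let φ : AdjoinRoot p →ₐ[F] Module.End F V :=
    Ideal.Quotient.liftₐ _ (aeval S) fun q hq => by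
      obtain ⟨r, rfl⟩ := Ideal.mem_span_singleton'.mp hq
      rw [map_mul, h, mul_zero]
  let _ : Module (AdjoinRoot p) V := Module.compHom V φ.toRingHom
  have : IsScalarTower F (AdjoinRoot p) V :=
    ⟨fun a k v => show φ (a • k) v = a • φ k v by rw [map_smul]; rfl⟩
  rw [← Module.finrank_mul_finrank F (AdjoinRoot p) V,
    (AdjoinRoot.powerBasis hp.ne_zero).finrank, AdjoinRoot.powerBasis_dim]
  exact dvd_mul_right _ _

theorem natDegree_dvd_finrank_of_le_ker_aeval {T : Module.End F V} {p : F[X]} (hp : Irreducible p)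
    {U : Submodule F V} (hU : ∀ x ∈ U, T x ∈ U) (hUp : U ≤ ker (aeval T p)) :
    p.natDegree ∣ finrank F U :=
  natDegree_dvd_finrank_of_aeval_eq_zero (S := T.restrict hU) hp <|
    LinearMap.ext fun x => Subtype.ext <| by rw [coe_aeval_restrict_apply]; exact hUp x.2

theorem natDegree_dvd_finrank_map_pow_ker_pow_succ (T : Module.End F V) {p : F[X]}
    (hp : Irreducible p) (k : ℕ) :
    p.natDegree ∣ finrank F ((ker (aeval T p ^ (k + 1))).map (aeval T p ^ k)) := by
  have hTP : Commute T (aeval T p) := by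
    simpa only [aeval_X] using (Commute.all X p).map (aeval T)
  have hle : (ker (aeval T p ^ (k + 1))).map (aeval T p ^ k) ≤ ker (aeval T p) := by
    rintro _ ⟨x, hx, rfl⟩
    rw [SetLike.mem_coe, mem_ker] at hx
    rwa [mem_ker, ← Module.End.mul_apply, ← pow_succ']
  exact natDegree_dvd_finrank_of_le_ker_aeval hp (Module.End.mapsTo_map_pow_ker_pow T hTP k _) hle

theorem natDegree_dvd_finrank_ker_pow [FiniteDimensional F V] (T : Module.End F V) {p : F[X]}
    (hp : Irreducible p) : ∀ k, p.natDegree ∣ finrank F (ker (aeval T p ^ k))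
  | 0 => by
    rw [pow_zero, Module.End.one_eq_id, ker_id, finrank_bot]
    exact dvd_zero _
  | k + 1 => by
    rw [← Module.End.finrank_map_pow_ker_pow_succ_add]
    exact dvd_add (natDegree_dvd_finrank_map_pow_ker_pow_succ T hp k)
      (natDegree_dvd_finrank_ker_pow T hp k)

end Field

theorem induced_minpoly_and_dim_divisibility_general
    {F V : Type*} [Field F] [AddCommGroup V] [Module F V] [FiniteDimensional F V]
    (T : Module.End F V) (p : Polynomial F) (d m : ℕ)
    (hirr : Irreducible p)
    (hm : p.natDegree = m) (hmin : minpoly F T = p ^ d) :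
    (∀ i : ℕ, 1 ≤ i → i ≤ d →
      (∀ q : Polynomial F,
        (∀ x ∈ LinearMap.ker ((Polynomial.aeval T p) ^ i),
          (Polynomial.aeval T q) x ∈ LinearMap.ker ((Polynomial.aeval T p) ^ (i - 1)))
        ↔ p ∣ q) ∧
      m ∣ (Module.finrank F (LinearMap.ker ((Polynomial.aeval T p) ^ i)) -
            Module.finrank F (LinearMap.ker ((Polynomial.aeval T p) ^ (i - 1))))) ∧
    m ∣ Module.finrank F V := by
  subst hm
  have hPd : aeval T p ^ d = 0 := by rw [← map_pow, ← hmin, minpoly.aeval]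
  refine ⟨fun i hi hid => ?_, ?_⟩
  · obtain ⟨k, rfl⟩ := Nat.exists_eq_add_of_le' hi
    have hstrict : ¬ ker (aeval T p ^ (k + 1)) ≤ ker (aeval T p ^ k) := fun h =>
      aeval_pow_ne_zero_of_minpoly_eq_pow hirr hmin hid
        (Module.End.pow_eq_zero_of_ker_pow_succ_le hPd (by omega) h)
    rw [Nat.add_sub_cancel, ← Module.End.finrank_map_pow_ker_pow_succ_add, Nat.add_sub_cancel]
    exact ⟨fun q => forall_aeval_mem_ker_pow_iff_dvd T hirr hstrict,
      natDegree_dvd_finrank_map_pow_ker_pow_succ T hirr k⟩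
  · have hdvd := natDegree_dvd_finrank_ker_pow T hirr d
    rwa [hPd, ker_zero, finrank_top] at hdvd

/-- Let `m_T = p^d` with `p` monic irreducible of degree `m`, and
`Vᵢ = ker p(T)ⁱ`. For `1 ≤ i ≤ d` the operator induced by `T` on `Vᵢ/Vᵢ₋₁` has
minimal polynomial `p` (expressed here as: a polynomial `q` annihilates the
induced operator iff `p ∣ q`); consequently `m` divides `dim Vᵢ/Vᵢ₋₁` and `m`
divides `dim V`. -/
theorem induced_minpoly_and_dim_divisibility
    {F V : Type*} [Field F] [AddCommGroup V] [Module F V] [FiniteDimensional F V]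
    (T : Module.End F V) (p : Polynomial F) (d m : ℕ)
    (hmonic : p.Monic) (hirr : Irreducible p) (hd : 1 ≤ d)
    (hm : p.natDegree = m) (hmin : minpoly F T = p ^ d) :
    (∀ i : ℕ, 1 ≤ i → i ≤ d →
      (∀ q : Polynomial F,
        (∀ x ∈ LinearMap.ker ((Polynomial.aeval T p) ^ i),
          (Polynomial.aeval T q) x ∈ LinearMap.ker ((Polynomial.aeval T p) ^ (i - 1)))
        ↔ p ∣ q) ∧
      m ∣ (Module.finrank F (LinearMap.ker ((Polynomial.aeval T p) ^ i)) -
            Module.finrank F (LinearMap.ker ((Polynomial.aeval T p) ^ (i - 1))))) ∧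
    m ∣ Module.finrank F V :=
  induced_minpoly_and_dim_divisibility_general T p d m hirr hm hmin
end

section
/- Let $T$ be a linear operator on a finite-dimensional vector space $\mathbb{V}$ over a field $\mathbb{F}$. An operator $S$ commuting with $T$ leaves every $T$-invariant subspace of $\mathbb{V}$ invariant if and only if $S$ is a polynomial in $T$ with coefficients in $\mathbb{F}$. -/
/-!
Commuting with `T` makes `S` an endomorphism of the `F[X]`-module `V` (with `X` acting as `T`),
whose submodules are the `T`-invariant subspaces; so `S` maps every cyclic submodule `F[X] ∙ v`
into itself. By the structure theorem this module is a finite direct sum of cyclic modules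
`F[X] ⧸ (pᵢ ^ eᵢ)`. Applying `S` to the sum of their generators and comparing components shows
that `S` acts on every generator, hence everywhere, as one and the same polynomial in `T`.
-/

open Polynomial DirectSum

theorem DirectSum.exists_eq_smul_of_forall_mem_span_singleton {R ι : Type*} [CommRing R]
    [Fintype ι] {I : ι → Ideal R} (f : Module.End R (⨁ i, R ⧸ I i))
    (hf : ∀ v, f v ∈ R ∙ v) : ∃ a : R, ∀ v, f v = a • v := by
  classical
  set u : ι → ⨁ i, R ⧸ I i := fun i => lof R ι _ i 1
  obtain ⟨a, ha⟩ := Submodule.mem_span_singleton.mp (hf (∑ i, u i))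
  choose b hb using fun i => Submodule.mem_span_singleton.mp (hf (u i))
  have hu : ∀ i, f (u i) = a • u i := by
    intro i
    have hi := congrArg (component R ι _ i) ha
    simp [u, map_sum, ← hb, component.of] at hi
    rw [← hb, ← LinearMap.map_smul, ← LinearMap.map_smul, hi]
  have hfa : f = a • LinearMap.id :=
    linearMap_ext R fun i => Submodule.linearMap_qext _ (LinearMap.ext_ring (hu i))
  exact ⟨a, fun v => by rw [hfa]; rfl⟩

theorem Module.IsTorsion.exists_eq_smul_of_forall_mem_span_singleton {R M : Type*} [CommRing R]
    [IsDomain R] [IsPrincipalIdealRing R] [AddCommGroup M] [Module R M] [Module.Finite R M]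
    (hM : Module.IsTorsion R M) (f : Module.End R M) (hf : ∀ v, f v ∈ R ∙ v) :
    ∃ a : R, ∀ v, f v = a • v := by
  obtain ⟨ι, _, p, -, e, ⟨φ⟩⟩ := Module.equiv_directSum_of_isTorsion hM
  obtain ⟨a, ha⟩ := DirectSum.exists_eq_smul_of_forall_mem_span_singleton (φ.conj f) fun w => by
    obtain ⟨c, hc⟩ := Submodule.mem_span_singleton.mp (hf (φ.symm w))
    exact Submodule.mem_span_singleton.mpr ⟨c, by simp [LinearEquiv.conj_apply, ← hc]⟩
  exact ⟨a, fun v => φ.injective <| by simpa [LinearEquiv.conj_apply] using ha (φ v)⟩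

theorem Module.End.exists_eq_aeval_of_commute_of_forall_invariant {F V : Type*} [Field F]
    [AddCommGroup V] [Module F V] [FiniteDimensional F V] {T S : Module.End F V}
    (hST : Commute S T) (hS : ∀ W : Submodule F V, (∀ x ∈ W, T x ∈ W) → ∀ x ∈ W, S x ∈ W) :
    ∃ q : F[X], S = aeval T q := by
  let of := Module.AEval'.of T
  let S' : Module.End F[X] (Module.AEval' T) := LinearMap.ofAEval T (of.toLinearMap ∘ₗ S)
    fun m => by simp [of, Module.AEval'.X_smul_of, ← Module.End.mul_apply, hST.eq]
  have hS' : ∀ v, S' v ∈ F[X] ∙ v := fun v => by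
    let W := ((F[X] ∙ v).restrictScalars F).comap of.toLinearMap
    have hW : ∀ x ∈ W, T x ∈ W := fun x (hx : of x ∈ F[X] ∙ v) =>
      show of (T x) ∈ F[X] ∙ v from Module.AEval'.X_smul_of T x ▸ (F[X] ∙ v).smul_mem X hx
    exact hS W hW (of.symm v) (by simp [W, Submodule.mem_span_singleton_self])
  obtain ⟨q, hq⟩ := (Module.AEval.isTorsion_of_finiteDimensional F V T)
    |>.exists_eq_smul_of_forall_mem_span_singleton S' hS'
  refine ⟨q, LinearMap.ext fun m => of.injective ?_⟩
  exact (hq (of m)).trans (Module.AEval.of_aeval_smul T q m).symm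

/-- An operator `S` commuting with `T` leaves every `T`-invariant subspace
invariant iff `S` is a polynomial in `T`. -/
theorem strongly_commutes_iff_polynomial
    {F V : Type*} [Field F] [AddCommGroup V] [Module F V] [FiniteDimensional F V]
    (T S : Module.End F V) (hST : S * T = T * S) :
    (∀ W : Submodule F V, (∀ x ∈ W, T x ∈ W) → ∀ x ∈ W, S x ∈ W) ↔
      ∃ q : Polynomial F, S = Polynomial.aeval T q := by
  refine ⟨Module.End.exists_eq_aeval_of_commute_of_forall_invariant hST, ?_⟩
  rintro ⟨q, rfl⟩ W hW x hx
  exact aeval_apply_smul_mem_of_le_comap hx q T hW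
end

section
/- Let $T \in L(\mathbb{V})$ with minimal polynomial $m_T(x) = p(x)^d$ where $p(x)$ is monic irreducible over $\mathbb{F}$ and $p'(x) \not\equiv 0$. Then there exists an operator $S$ in the subalgebra $\mathbb{F}[T]$ whose minimal polynomial is exactly $p(x)$. -/
/-!
Since `p(T)` is nilpotent and `p'(T)` is invertible (`p` being separable), Newton's iteration
`x ↦ x - p(x)/p'(x)`, run in the commutative algebra `F[T]` from `T`, reaches an exact root `S`
of `p` after finitely many steps.
As `p` is monic irreducible and kills `S`, it is the minimal polynomial of `S`.
-/

open Polynomial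

namespace Polynomial

variable {R A : Type*} [CommRing R]

theorem Separable.isUnit_aeval_derivative [CommRing A] [Algebra R A] {P : R[X]}
    (hP : P.Separable) {k : ℕ} {a : A} (ha : aeval a (P ^ k) = 0) :
    IsUnit (aeval a (derivative P)) := by
  obtain ⟨u, v, huv⟩ : IsCoprime (P ^ k) (derivative P) := hP.pow_left
  refine .of_mul_eq_one_right (aeval a v) ?_
  simpa [ha] using congr_arg (aeval a) huv

theorem Separable.exists_aeval_aeval_eq_zero [Ring A] [Algebra R A] {P : R[X]}
    (hP : P.Separable) {k : ℕ} {a : A} (ha : aeval a (P ^ k) = 0) :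
    ∃ q : R[X], aeval (aeval a q) P = 0 := by
  let x : Algebra.adjoin R {a} := ⟨a, Algebra.self_mem_adjoin_singleton R a⟩
  have hx : aeval x (P ^ k) = 0 := Subtype.ext (by simpa [x, coe_aeval_mk_apply] using ha)
  have hx_nil : IsNilpotent (aeval x P) := ⟨k, by rwa [← map_pow]⟩
  obtain ⟨⟨s, hs⟩, -, hsP⟩ :=
    (existsUnique_nilpotent_sub_and_aeval_eq_zero hx_nil (hP.isUnit_aeval_derivative hx)).exists
  rw [Algebra.adjoin_singleton_eq_range_aeval] at hs
  obtain ⟨q, rfl⟩ := hs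
  exact ⟨q, by simpa [coe_aeval_mk_apply] using congr_arg Subtype.val hsP⟩

end Polynomial

theorem minpoly.nontrivial_of_not_isUnit {F A : Type*} [Field F] [Ring A] [Algebra F A] {a : A}
    (h : ¬IsUnit (minpoly F a)) : Nontrivial A := by
  by_contra hA
  rw [not_nontrivial_iff_subsingleton] at hA
  exact h (minpoly.subsingleton F a ▸ isUnit_one)

theorem exists_semisimple_in_FT_general
    {F V : Type*} [Field F] [AddCommGroup V] [Module F V]
    (T : Module.End F V) (p : Polynomial F) (d : ℕ)
    (hmonic : p.Monic) (hirr : Irreducible p) (hd : 1 ≤ d)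
    (hmin : minpoly F T = p ^ d) (hder : Polynomial.derivative p ≠ 0) :
    ∃ q : Polynomial F, minpoly F (Polynomial.aeval T q) = p := by
  have hsep : p.Separable := (separable_iff_derivative_ne_zero hirr).mpr hder
  have : Nontrivial (Module.End F V) := minpoly.nontrivial_of_not_isUnit (a := T) <| by
    rw [hmin, isUnit_pow_iff (by omega)]
    exact hirr.not_isUnit
  obtain ⟨q, hq⟩ := hsep.exists_aeval_aeval_eq_zero (hmin ▸ minpoly.aeval F T)
  exact ⟨q, (minpoly.eq_of_irreducible_of_monic hirr hq hmonic).symm⟩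

/-- If `m_T = p^d` with `p` monic irreducible and `p' ≢ 0`, then there is an
operator `S` in `F[T]` (a polynomial in `T`) with minimal polynomial exactly
`p`. -/
theorem exists_semisimple_in_FT
    {F V : Type*} [Field F] [AddCommGroup V] [Module F V] [FiniteDimensional F V]
    (T : Module.End F V) (p : Polynomial F) (d : ℕ)
    (hmonic : p.Monic) (hirr : Irreducible p) (hd : 1 ≤ d)
    (hmin : minpoly F T = p ^ d) (hder : Polynomial.derivative p ≠ 0) :
    ∃ q : Polynomial F, minpoly F (Polynomial.aeval T q) = p :=
  exists_semisimple_in_FT_general T p d hmonic hirr hd hmin hder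
end

section
/- Let $T$ be a linear operator on a finite-dimensional vector space $\mathbb{V}$ over a field $\mathbb{F}$ with more than two elements. Then every element of the centralizer algebra $Z_L(T)$ is a sum of at most two invertible elements of $Z_L(T)$. -/
open Polynomial

/-! Let `m` be the minimal polynomial of `S`. Since `|F| > 2`, there is a polynomial `g` such
that both `g` and `X - g` are coprime to `m`: extending a choice for `m` to a choice for `p * m`
with `p` irreducible and `p ∤ m`, the candidates `g + m * C t` for `t ∈ {0, 1, c}` are pairwise
incongruent mod `p`, so one avoids both bad residues `0` and `X`. Then `g(S)` and `S - g(S)` are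
invertible, and, being polynomials in `S`, they commute with `T`. -/

theorem Set.exists_notMem_notMem_of_subsingleton {α : Type*} {a b c : α} (hab : a ≠ b)
    (hac : a ≠ c) (hbc : b ≠ c) {s t : Set α} (hs : s.Subsingleton) (ht : t.Subsingleton) :
    ∃ x, x ∉ s ∧ x ∉ t := by
  by_contra! h
  by_cases ha : a ∈ s
  · have hb : b ∈ t := h b fun hb => hab (hs ha hb)
    have hc : c ∈ t := h c fun hc => hac (hs ha hc)
    exact hbc (ht hb hc)
  · have hb : b ∈ s := by_contra fun hb => hab (ht (h a ha) (h b hb))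
    have hc : c ∈ s := by_contra fun hc => hac (ht (h a ha) (h c hc))
    exact hbc (hs hb hc)

namespace Polynomial

variable {F : Type*} [Field F]

theorem subsingleton_setOf_dvd_add_mul_C {p a : F[X]} (hp : Prime p) (hpa : ¬p ∣ a) (f : F[X]) :
    {t : F | p ∣ f + a * C t}.Subsingleton := by
  intro s hs t ht
  have hdvd : p ∣ a * C (s - t) := by
    rw [C_sub, mul_sub, show a * C s - a * C t = (f + a * C s) - (f + a * C t) by ring]
    exact dvd_sub hs ht
  by_contra hst
  have hC : IsUnit (C (s - t)) := isUnit_C.2 (sub_ne_zero.2 hst).isUnit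
  exact hp.not_isUnit (isUnit_of_dvd_unit ((hp.dvd_or_dvd hdvd).resolve_left hpa) hC)

theorem exists_isCoprime_and_isCoprime_X_sub_mul (hF : ∃ c : F, c ≠ 0 ∧ c ≠ 1) {p a g : F[X]}
    (hp : Irreducible p) (hg : IsCoprime g a) (hXg : IsCoprime (X - g) a) :
    ∃ g', IsCoprime g' (p * a) ∧ IsCoprime (X - g') (p * a) := by
  by_cases hpa : p ∣ a
  · exact ⟨g, (hg.of_isCoprime_of_dvd_right hpa).mul_right hg,
      (hXg.of_isCoprime_of_dvd_right hpa).mul_right hXg⟩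
  obtain ⟨c, hc0, hc1⟩ := hF
  have hX : {t : F | p ∣ X - (g + a * C t)}.Subsingleton := by
    simpa only [show ∀ t, X - (g + a * C t) = X - g + -a * C t by intro t; ring] using
      subsingleton_setOf_dvd_add_mul_C hp.prime (dvd_neg.not.2 hpa) (X - g)
  obtain ⟨t, ht, hXt⟩ := Set.exists_notMem_notMem_of_subsingleton zero_ne_one hc0.symm hc1.symm
    (subsingleton_setOf_dvd_add_mul_C hp.prime hpa g) hX
  refine ⟨g + a * C t, ((hp.coprime_iff_not_dvd.2 ht).symm).mul_right (hg.add_mul_left_left _),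
    ((hp.coprime_iff_not_dvd.2 hXt).symm).mul_right ?_⟩
  convert hXg.add_mul_left_left (-C t) using 1
  ring

theorem exists_isCoprime_and_isCoprime_X_sub (hF : ∃ c : F, c ≠ 0 ∧ c ≠ 1) {m : F[X]}
    (hm : m ≠ 0) : ∃ g, IsCoprime g m ∧ IsCoprime (X - g) m := by
  induction m using WfDvdMonoid.induction_on_irreducible with
  | zero => exact absurd rfl hm
  | unit u hu =>
    exact ⟨0, isCoprime_one_right.of_isCoprime_of_dvd_right hu.dvd,
      isCoprime_one_right.of_isCoprime_of_dvd_right hu.dvd⟩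
  | mul a p ha hp ih =>
    obtain ⟨g, hg, hXg⟩ := ih ha
    exact exists_isCoprime_and_isCoprime_X_sub_mul hF hp hg hXg

end Polynomial

section Algebra

variable {R A : Type*} [CommRing R] [Ring A] [Algebra R A]

theorem Polynomial.isUnit_aeval_of_isCoprime_minpoly {x : A} {q : R[X]}
    (h : IsCoprime q (minpoly R x)) : IsUnit (aeval x q) := by
  obtain ⟨a, b, hab⟩ := h
  have hinv : aeval x a * aeval x q = 1 := by
    simpa [minpoly.aeval] using congrArg (aeval x) hab
  refine isUnit_iff_exists.2 ⟨aeval x a, ?_, hinv⟩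
  rw [← map_mul, mul_comm, map_mul, hinv]

theorem Commute.aeval_right {y x : A} (h : Commute y x) (q : R[X]) : Commute y (aeval x q) :=
  Algebra.commute_of_mem_adjoin_singleton_of_commute (aeval_mem_adjoin_singleton R x) h

end Algebra

theorem IsIntegral.exists_isUnit_aeval_and_isUnit_aeval_X_sub {F A : Type*} [Field F] [Ring A]
    [Algebra F A] (hF : ∃ c : F, c ≠ 0 ∧ c ≠ 1) {x : A} (hx : IsIntegral F x) :
    ∃ g : F[X], IsUnit (aeval x g) ∧ IsUnit (aeval x (X - g)) := by
  obtain ⟨g, hg, hXg⟩ := exists_isCoprime_and_isCoprime_X_sub hF (minpoly.ne_zero hx)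
  exact ⟨g, isUnit_aeval_of_isCoprime_minpoly hg, isUnit_aeval_of_isCoprime_minpoly hXg⟩

/-- Over a field with more than two elements, every element of the centralizer
algebra `Z_L(T)` is a sum of at most two invertible elements of `Z_L(T)`. -/
theorem centralizer_sum_of_two_units
    {F V : Type*} [Field F] [AddCommGroup V] [Module F V] [FiniteDimensional F V]
    (hF : ∃ c : F, c ≠ 0 ∧ c ≠ 1)
    (T S : Module.End F V) (hS : S * T = T * S) :
    ∃ U₁ U₂ : Module.End F V,
      U₁ * T = T * U₁ ∧ U₂ * T = T * U₂ ∧ IsUnit U₁ ∧ IsUnit U₂ ∧ S = U₁ + U₂ := by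
  obtain ⟨g, hg, hXg⟩ := (IsIntegral.of_finite F S).exists_isUnit_aeval_and_isUnit_aeval_X_sub hF
  have hT : Commute T S := hS.symm
  refine ⟨aeval S g, aeval S (X - g), ((hT.aeval_right g).eq).symm,
    ((hT.aeval_right (X - g)).eq).symm, hg, hXg, ?_⟩
  rw [← map_add, add_sub_cancel, aeval_X]
end
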